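/- Let α ∈ (0,1), τ ≥ 0, ε > 0 and m ≥ 1. Let P and P̂ be Borel probability measures on ℝ with TV(P, P̂) ≤ τ. Let S₁,…,S_m be independent random variables each with law P̂, let k = ⌈(1−α)m⌉, and let q be the k-th smallest value among S₁,…,S_m. Then, with probability at least 1 − 2·exp(−2mε²) over the sample S₁,…,S_m, one has P((q, ∞)) ≤ α + ε + τ. -/

import Mathlib

open MeasureTheory

/-- Total variation distance between two measures on ℝ:
the supremum over measurable sets `A` of `|P A - Q A|`. -/
noncomputable def TV (P Q : Measure ℝ) : ℝ :=
  ⨆ A : {A : Set ℝ // MeasurableSet A}, |(P A.1).toReal - (Q A.1).toReal|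

/-- The `k`-th smallest value among `s 0, …, s (m-1)` (1-indexed: `k = 1` gives
the minimum), i.e. the entry at position `k - 1` of the ascending sort. -/
noncomputable def kthSmallest {m : ℕ} (s : Fin m → ℝ) (k : ℕ) : ℝ :=
  ((Finset.univ.val.map s).sort (· ≤ ·)).getD (k - 1) 0

section Auxiliary

open ProbabilityTheory Set Filter Topology ENNReal

lemma bernoulli_mgf_bound (p t : ℝ) (hp0 : 0 ≤ p) (hp1 : p ≤ 1) (ht : 0 ≤ t) :
    1 - p + p * Real.exp t ≤ Real.exp (p * t + t ^ 2 / 8) := by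
  rcases eq_or_lt_of_le hp1 with h1 | h1
  · subst h1; simpa using Real.exp_le_exp.2 (by nlinarith [sq_nonneg t] : t ≤ 1 * t + t ^ 2 / 8)
  have h1p : 0 < 1 - p := by linarith
  rcases eq_or_lt_of_le hp0 with h0 | h0
  · subst h0
    simpa using Real.one_le_exp (by positivity : (0:ℝ) ≤ 0 * t + t ^ 2 / 8)
  set D : ℝ → ℝ := fun t => 1 - p + p * Real.exp t with hDdef
  have hD : ∀ x : ℝ, 0 < D x := fun x => by
    have := Real.exp_pos x; simp only [hDdef]; nlinarith
  set φ : ℝ → ℝ := fun x => p + x / 4 - p * Real.exp x / D x with hφdef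
  have hDderiv : ∀ x : ℝ, HasDerivAt D (p * Real.exp x) x := fun x => by
    simpa [hDdef] using ((Real.hasDerivAt_exp x).const_mul p).const_add (1 - p)
  have hφderiv : ∀ x : ℝ, HasDerivAt φ
      (1 / 4 - p * Real.exp x * (1 - p) / (D x) ^ 2) x := by
    intro x
    have hdiv : HasDerivAt (fun x => p * Real.exp x / D x)
        ((p * Real.exp x * D x - p * Real.exp x * (p * Real.exp x)) / (D x) ^ 2) x :=
      ((Real.hasDerivAt_exp x).const_mul p).div (hDderiv x) (hD x).ne'
    have h2 : HasDerivAt φ (1 / 4 - (p * Real.exp x * D x - p * Real.exp x * (p * Real.exp x)) / (D x) ^ 2) x := by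
      have := (((hasDerivAt_id x).div_const 4).const_add p).sub hdiv
      exact this
    convert h2 using 1
    have h3 : p * Real.exp x * D x - p * Real.exp x * (p * Real.exp x) = p * Real.exp x * (1 - p) := by
      simp only [hDdef]; ring
    rw [h3]
  have hφ0 : φ 0 = 0 := by
    simp only [hφdef, hDdef, Real.exp_zero, mul_one]
    field_simp
    ring
  have hφnonneg : ∀ x : ℝ, 0 ≤ x → 0 ≤ φ x := by
    intro x hx
    have hmono : Monotone φ := by
      apply monotone_of_deriv_nonneg
      · exact fun x => (hφderiv x).differentiableAt
      · intro y
        rw [(hφderiv y).deriv]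
        have hD2 : (0:ℝ) < (D y) ^ 2 := by positivity
        have key : 4 * (p * Real.exp y * (1 - p)) ≤ (D y) ^ 2 := by
          have hDy : D y = 1 - p + p * Real.exp y := rfl
          rw [hDy]
          nlinarith [sq_nonneg ((1 - p) - p * Real.exp y), Real.exp_pos y]
        refine sub_nonneg.2 ((div_le_iff₀ hD2).2 (by clear_value D φ; linarith [key]))
    have := hmono hx
    rw [hφ0] at this; linarith
  set g : ℝ → ℝ := fun x => p * x + x ^ 2 / 8 - Real.log (D x) with hgdef
  have hgderiv : ∀ x : ℝ, HasDerivAt g (φ x) x := by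
    intro x
    have hlog : HasDerivAt (fun x => Real.log (D x)) (p * Real.exp x / D x) x :=
      (hDderiv x).log (hD x).ne'
    have h2 := (((hasDerivAt_id x).const_mul p).add ((hasDerivAt_pow 2 x).div_const 8)).sub hlog
    refine HasDerivAt.congr_deriv h2 ?_
    simp only [hφdef, Nat.cast_ofNat, pow_one]
    ring
  have hg0 : g 0 = 0 := by
    simp only [hgdef, hDdef, Real.exp_zero, mul_one, mul_zero]
    norm_num
  have hgt : 0 ≤ g t := by
    have hmono : MonotoneOn g (Set.Ici 0) := by
      apply monotoneOn_of_deriv_nonneg (convex_Ici 0)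
        (fun x _ => (hgderiv x).continuousAt.continuousWithinAt)
        (fun x _ => (hgderiv x).differentiableAt.differentiableWithinAt)
      intro x hx
      rw [(hgderiv x).deriv]
      exact hφnonneg x (le_of_lt (by simpa using hx))
    have := hmono (Set.self_mem_Ici) (Set.mem_Ici.2 ht) ht
    rw [hg0] at this; linarith
  have hlog : Real.log (D t) ≤ p * t + t ^ 2 / 8 := by
    simp only [hgdef] at hgt; linarith
  calc D t = Real.exp (Real.log (D t)) := (Real.exp_log (hD t)).symm
    _ ≤ _ := Real.exp_le_exp.2 hlog

lemma lintegral_pi_prod_pow (μ : Measure ℝ) [SigmaFinite μ] (g : ℝ → ℝ≥0∞) (hg : Measurable g) :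
    ∀ n : ℕ, ∫⁻ s, ∏ i : Fin n, g (s i) ∂(Measure.pi fun _ : Fin n => μ) = (∫⁻ x, g x ∂μ) ^ n := by
  intro n
  induction n with
  | zero => simp [Measure.pi_of_empty]
  | succ n ih =>
    have hmp : MeasurePreserving (MeasurableEquiv.piFinSuccAbove (fun _ : Fin (n+1) => ℝ) 0)
        (Measure.pi fun _ => μ) (μ.prod (Measure.pi fun _ : Fin n => μ)) :=
      measurePreserving_piFinSuccAbove (fun _ => μ) 0
    set e := MeasurableEquiv.piFinSuccAbove (fun _ : Fin (n+1) => ℝ) 0 with he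
    have hmeas : Measurable fun y : ℝ × (Fin n → ℝ) => ∏ i : Fin (n+1), g ((e.symm y) i) := by
      apply Finset.measurable_prod
      intro i _
      exact hg.comp ((measurable_pi_apply i).comp e.symm.measurable)
    calc ∫⁻ s, ∏ i : Fin (n+1), g (s i) ∂(Measure.pi fun _ => μ)
        = ∫⁻ s, (fun y => ∏ i : Fin (n+1), g ((e.symm y) i)) (e s) ∂(Measure.pi fun _ => μ) := by
          congr 1; ext s; simp
      _ = ∫⁻ y, ∏ i : Fin (n+1), g ((e.symm y) i) ∂(μ.prod (Measure.pi fun _ : Fin n => μ)) :=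
          hmp.lintegral_comp hmeas
      _ = ∫⁻ y : ℝ × (Fin n → ℝ), g y.1 * ∏ i : Fin n, g (y.2 i)
            ∂(μ.prod (Measure.pi fun _ : Fin n => μ)) := by
          congr 1; ext y
          rw [Fin.prod_univ_succAbove (fun i => g ((e.symm y) i)) 0]
          simp [he, MeasurableEquiv.piFinSuccAbove]
      _ = (∫⁻ x, g x ∂μ) * ∫⁻ p, ∏ i : Fin n, g (p i) ∂(Measure.pi fun _ : Fin n => μ) :=
          lintegral_prod_mul hg.aemeasurable
            (Finset.measurable_prod _ fun i _ => hg.comp (measurable_pi_apply i)).aemeasurable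
      _ = (∫⁻ x, g x ∂μ) ^ (n + 1) := by rw [ih]; ring

lemma chernoff_indicator (μ : Measure ℝ) [IsProbabilityMeasure μ] (x₀ : ℝ) (m : ℕ)
    (t a : ℝ) (ht : 0 ≤ t) :
    (Measure.pi fun _ : Fin m => μ)
        {s : Fin m → ℝ | a ≤ ∑ i : Fin m, (if s i < x₀ then (1:ℝ) else 0)} ≤
      ENNReal.ofReal (Real.exp (-t * a) *
        (1 - (μ (Iio x₀)).toReal + (μ (Iio x₀)).toReal * Real.exp t) ^ m) := by
  classical
  set p : ℝ := (μ (Iio x₀)).toReal with hp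
  have hp0 : 0 ≤ p := ENNReal.toReal_nonneg
  have hp1 : p ≤ 1 := by
    rw [hp]
    exact ENNReal.toReal_le_of_le_ofReal zero_le_one (by simpa using prob_le_one)
  have hμIio : μ (Iio x₀) = ENNReal.ofReal p := by
    rw [hp, ENNReal.ofReal_toReal (measure_ne_top μ _)]
  set g : ℝ → ℝ≥0∞ := fun x => if x < x₀ then ENNReal.ofReal (Real.exp t) else 1 with hg
  have hgmeas : Measurable g := by
    apply Measurable.ite (measurableSet_Iio) measurable_const measurable_const
  have hgint : ∫⁻ x, g x ∂μ = ENNReal.ofReal (1 - p + p * Real.exp t) := by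
    have hgeq : g = fun x => (Iio x₀).indicator (fun _ => ENNReal.ofReal (Real.exp t)) x
        + (Iio x₀)ᶜ.indicator (fun _ => 1) x := by
      funext x
      by_cases hx : x < x₀
      · simp [hg, hx, indicator, mem_Iio, not_le.2 hx]
      · simp [hg, hx, indicator, mem_Iio, not_lt.1 hx]
    rw [hgeq]
    rw [lintegral_add_left (measurable_const.indicator measurableSet_Iio)]
    rw [lintegral_indicator_const measurableSet_Iio,
      lintegral_indicator_const measurableSet_Iio.compl]
    rw [prob_compl_eq_one_sub measurableSet_Iio, hμIio, one_mul]
    have h1 : (1:ℝ≥0∞) - ENNReal.ofReal p = ENNReal.ofReal (1 - p) := by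
      rw [ENNReal.ofReal_sub _ hp0, ENNReal.ofReal_one]
    rw [h1, ← ENNReal.ofReal_mul (Real.exp_nonneg t),
      ← ENNReal.ofReal_add (by positivity) (by linarith)]
    congr 1
    ring
  set f : (Fin m → ℝ) → ℝ≥0∞ := fun s => ∏ i : Fin m, g (s i) with hf
  have hfmeas : Measurable f :=
    Finset.measurable_prod _ fun i _ => hgmeas.comp (measurable_pi_apply i)
  have hfeq : ∀ s : Fin m → ℝ,
      f s = ENNReal.ofReal (Real.exp (t * ∑ i : Fin m, (if s i < x₀ then (1:ℝ) else 0))) := by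
    intro s
    rw [Finset.mul_sum, Real.exp_sum, ENNReal.ofReal_prod_of_nonneg (fun i _ => Real.exp_nonneg _)]
    apply Finset.prod_congr rfl
    intro i _
    by_cases hx : s i < x₀ <;> simp [hg, hx]
  have hsub : {s : Fin m → ℝ | a ≤ ∑ i : Fin m, (if s i < x₀ then (1:ℝ) else 0)} ⊆
      {s : Fin m → ℝ | ENNReal.ofReal (Real.exp (t * a)) ≤ f s} := by
    intro s hs
    rw [Set.mem_setOf_eq, hfeq s]
    exact ENNReal.ofReal_le_ofReal (Real.exp_le_exp.2 (mul_le_mul_of_nonneg_left hs ht))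
  have hlint : ∫⁻ s, f s ∂(Measure.pi fun _ : Fin m => μ) =
      ENNReal.ofReal ((1 - p + p * Real.exp t) ^ m) := by
    rw [hf, lintegral_pi_prod_pow μ g hgmeas m, hgint,
      ← ENNReal.ofReal_pow (by nlinarith [Real.exp_nonneg t])]
  have hmarkov := mul_meas_ge_le_lintegral₀ (μ := Measure.pi fun _ : Fin m => μ)
    hfmeas.aemeasurable (ENNReal.ofReal (Real.exp (t * a)))
  have hb : (Measure.pi fun _ : Fin m => μ)
      {s : Fin m → ℝ | ENNReal.ofReal (Real.exp (t * a)) ≤ f s} ≤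
      ENNReal.ofReal (Real.exp (-(t * a)) * (1 - p + p * Real.exp t) ^ m) := by
    calc (Measure.pi fun _ : Fin m => μ) {s | ENNReal.ofReal (Real.exp (t * a)) ≤ f s}
        = ENNReal.ofReal (Real.exp (-(t * a))) * (ENNReal.ofReal (Real.exp (t * a)) *
            (Measure.pi fun _ : Fin m => μ) {s | ENNReal.ofReal (Real.exp (t * a)) ≤ f s}) := by
          rw [← mul_assoc, ← ENNReal.ofReal_mul (Real.exp_nonneg _), ← Real.exp_add,
            neg_add_cancel, Real.exp_zero, ENNReal.ofReal_one, one_mul]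
      _ ≤ ENNReal.ofReal (Real.exp (-(t * a))) * ∫⁻ s, f s ∂(Measure.pi fun _ : Fin m => μ) :=
          mul_le_mul_right hmarkov _
      _ = ENNReal.ofReal (Real.exp (-(t * a)) * (1 - p + p * Real.exp t) ^ m) := by
          rw [hlint, ← ENNReal.ofReal_mul (Real.exp_nonneg _)]
  refine (measure_mono hsub).trans (hb.trans (le_of_eq ?_))
  rw [neg_mul]

lemma count_ge_of_kth_lt {m : ℕ} (s : Fin m → ℝ) (k : ℕ) (hk1 : 1 ≤ k) (hkm : k ≤ m) (x : ℝ)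
    (h : kthSmallest s k < x) : (k : ℝ) ≤ ∑ i : Fin m, (if s i < x then (1:ℝ) else 0) := by
  set l : List ℝ := (Finset.univ.val.map s).sort (· ≤ ·) with hl
  have hlen : l.length = m := by
    rw [hl, Multiset.length_sort, Multiset.card_map]
    simp
  have hsorted : l.Pairwise (· ≤ ·) := Multiset.pairwise_sort _ _
  have hk1m : k - 1 < l.length := by omega
  have hq : kthSmallest s k = l[k-1] := List.getD_eq_getElem l 0 hk1m
  -- all elements of l.take k are < x
  have htake : ∀ y ∈ l.take k, y < x := by
    intro y hy
    obtain ⟨j, hj, rfl⟩ := List.getElem_of_mem hy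
    have hjk : j < k := lt_of_lt_of_le hj (by simp [List.length_take])
    have hjl : j < l.length := by omega
    rw [List.getElem_take]
    have hle : l[j] ≤ l[k-1] := by
      rcases lt_or_eq_of_le (Nat.le_sub_one_of_lt hjk : j ≤ k - 1) with hlt | heq
      · exact (List.pairwise_iff_getElem.1 hsorted) j (k-1) hjl hk1m hlt
      · simp [heq]
    calc l[j] ≤ l[k-1] := hle
      _ < x := by rw [← hq]; exact h
  have hcountl : k ≤ l.countP (fun y => decide (y < x)) := by
    have h1 : (l.take k).countP (fun y => decide (y < x)) = (l.take k).length :=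
      List.countP_eq_length.2 (fun y hy => decide_eq_true (htake y hy))
    have h2 : (l.take k).length = k := by simp [List.length_take]; omega
    calc k = (l.take k).countP (fun y => decide (y < x)) := by rw [h1, h2]
      _ ≤ l.countP (fun y => decide (y < x)) := (List.take_sublist k l).countP_le
  have hcountM : l.countP (fun y => decide (y < x)) =
      Multiset.countP (fun y => y < x) (Finset.univ.val.map s) := by
    conv_rhs => rw [← Multiset.sort_eq (Finset.univ.val.map s) (· ≤ ·)]
    rw [Multiset.coe_countP]
  have hcard : Multiset.countP (fun y => y < x) (Finset.univ.val.map s) =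
      (Finset.univ.filter (fun i : Fin m => s i < x)).card := by
    rw [Multiset.countP_map]
    rfl
  have hfin : k ≤ (Finset.univ.filter (fun i : Fin m => s i < x)).card := by
    rw [← hcard, ← hcountM]; exact hcountl
  have hsum : ((Finset.univ.filter (fun i : Fin m => s i < x)).card : ℝ) =
      ∑ i : Fin m, (if s i < x then (1:ℝ) else 0) := by
    rw [Finset.card_filter]
    push_cast
    rfl
  calc (k : ℝ) ≤ ((Finset.univ.filter (fun i : Fin m => s i < x)).card : ℝ) := by exact_mod_cast hfin
    _ = _ := hsum

lemma abs_le_TV (P Q : Measure ℝ) [IsProbabilityMeasure P] [IsProbabilityMeasure Q]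
    {A : Set ℝ} (hA : MeasurableSet A) :
    |(P A).toReal - (Q A).toReal| ≤ TV P Q := by
  apply le_ciSup (f := fun A : {A : Set ℝ // MeasurableSet A} => |(P A.1).toReal - (Q A.1).toReal|)
    ?_ (⟨A, hA⟩ : {A : Set ℝ // MeasurableSet A})
  refine ⟨2, ?_⟩
  rintro y ⟨B, rfl⟩
  have h1 : (P B.1).toReal ≤ 1 :=
    ENNReal.toReal_le_of_le_ofReal zero_le_one (by simpa using prob_le_one)
  have h2 : (Q B.1).toReal ≤ 1 :=
    ENNReal.toReal_le_of_le_ofReal zero_le_one (by simpa using prob_le_one)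
  have h3 : 0 ≤ (P B.1).toReal := ENNReal.toReal_nonneg
  have h4 : 0 ≤ (Q B.1).toReal := ENNReal.toReal_nonneg
  rw [abs_le]
  constructor <;> linarith

lemma exists_quantile (μ : Measure ℝ) [IsProbabilityMeasure μ] (c : ℝ) (hc0 : 0 < c) (hc1 : c < 1) :
    ∃ x₀ : ℝ, μ (Set.Iio x₀) ≤ ENNReal.ofReal c ∧
      ∀ q : ℝ, (μ (Set.Iic q)).toReal < c → q < x₀ := by
  have hFmono : Monotone (cdf μ) := monotone_cdf μ
  set S : Set ℝ := {x | c ≤ cdf μ x} with hS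
  have hne : S.Nonempty := by
    have h := ((tendsto_cdf_atTop μ).eventually_const_le hc1).exists
    obtain ⟨x, hx⟩ := h
    exact ⟨x, hx⟩
  have hbdd : BddBelow S := by
    obtain ⟨y, hy⟩ := ((tendsto_cdf_atBot μ).eventually_lt_const hc0).exists
    refine ⟨y, fun z hz => ?_⟩
    by_contra hzy
    exact absurd (lt_of_le_of_lt (hFmono (le_of_lt (not_le.1 hzy))) hy) (not_lt.2 hz)
  set x₀ : ℝ := sInf S with hx₀
  have hSIci : S ⊆ Set.Ici x₀ := fun z hz => csInf_le hbdd hz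
  have hclos : x₀ ∈ closure S := csInf_mem_closure hne hbdd
  have hcont : ContinuousWithinAt (cdf μ) S x₀ :=
    ((cdf μ).right_continuous x₀).mono hSIci
  have hcx₀ : c ≤ cdf μ x₀ := by
    have h1 : cdf μ x₀ ∈ closure ((cdf μ) '' S) := hcont.mem_closure_image hclos
    have h2 : closure ((cdf μ) '' S) ⊆ Set.Ici c := by
      rw [← (isClosed_Ici (a := c)).closure_eq]
      apply closure_mono
      rintro y ⟨z, hz, rfl⟩
      exact hz
    exact h2 h1
  refine ⟨x₀, ?_, ?_⟩
  · -- μ (Iio x₀) ≤ ofReal c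
    have hunion : Set.Iio x₀ = ⋃ n : ℕ, Set.Iic (x₀ - 1 / (n + 1)) := by
      ext y
      simp only [mem_Iio, mem_iUnion, mem_Iic]
      constructor
      · intro hy
        obtain ⟨n, hn⟩ := exists_nat_one_div_lt (sub_pos.2 hy)
        exact ⟨n, by linarith⟩
      · rintro ⟨n, hn⟩
        have : (0:ℝ) < 1 / (n + 1) := by positivity
        linarith
    rw [hunion]
    rw [Monotone.measure_iUnion ?_]
    · apply iSup_le
      intro n
      have hlt : x₀ - 1 / (n + 1) < x₀ := by
        have : (0:ℝ) < 1 / (n + 1) := by positivity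
        linarith
      have hnotS : (x₀ - 1 / (n + 1)) ∉ S := fun hmem => absurd (hSIci hmem) (by simpa using hlt)
      have hcdf : cdf μ (x₀ - 1 / (n + 1)) < c := not_le.1 hnotS
      rw [← ofReal_cdf μ]
      exact ENNReal.ofReal_le_ofReal (le_of_lt hcdf)
    · intro a b hab
      apply Set.Iic_subset_Iic.2
      have : (1:ℝ) / (b + 1) ≤ 1 / (a + 1) := by
        apply one_div_le_one_div_of_le (by positivity)
        exact_mod_cast by omega
      linarith
  · intro q hq
    have hcdfq : cdf μ q < c := by rwa [cdf_eq_real, measureReal_def]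
    by_contra hqx
    exact absurd (lt_of_lt_of_le hcdfq (hcx₀.trans (hFmono (not_lt.1 hqx)))) (lt_irrefl _)

end Auxiliary

/-- One-sided (Type I error) consequence of the GSI coverage theorem:
if `TV(P, P̂) ≤ τ`, then with probability at least `1 - 2 exp(-2 m ε²)` over
`m` i.i.d. draws `S₁, …, S_m` from `P̂`, the true tail probability
`P((q, ∞))`, where `q` is the `⌈(1-α)m⌉`-th smallest draw (the empirical
`(1-α)`-upper quantile), is at most `α + ε + τ`. -/
theorem gsi_type_one_error_control
    (α τ ε : ℝ) (hα : α ∈ Set.Ioo (0 : ℝ) 1) (hτ : 0 ≤ τ) (hε : 0 < ε)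
    (m : ℕ) (hm : 1 ≤ m)
    (P Phat : Measure ℝ) [IsProbabilityMeasure P] [IsProbabilityMeasure Phat]
    (hTV : TV P Phat ≤ τ) :
    ENNReal.ofReal (1 - 2 * Real.exp (-2 * m * ε ^ 2)) ≤
      (Measure.pi fun _ : Fin m => Phat)
        {s : Fin m → ℝ |
          (P (Set.Ioi (kthSmallest s ⌈(1 - α) * m⌉₊))).toReal ≤ α + ε + τ} := by
  obtain ⟨hα0, hα1⟩ := hα
  set μm := Measure.pi fun _ : Fin m => Phat with hμm
  set k : ℕ := ⌈(1 - α) * m⌉₊ with hk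
  set E : Set (Fin m → ℝ) :=
    {s : Fin m → ℝ | (P (Set.Ioi (kthSmallest s k))).toReal ≤ α + ε + τ} with hE
  -- basic facts about k
  have hm0 : (0:ℝ) < m := by exact_mod_cast hm
  have hk1 : 1 ≤ k := by
    rw [hk]
    exact Nat.one_le_iff_ne_zero.2 (by
      simp only [ne_eq, Nat.ceil_eq_zero, not_le]
      nlinarith)
  have hkm : k ≤ m := by
    rw [hk]
    apply Nat.ceil_le.2
    nlinarith
  have hkge : (1 - α) * m ≤ (k : ℝ) := Nat.le_ceil _
  -- the P-tail is controlled by the Phat-tail plus τ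
  have hPtail : ∀ q : ℝ, (P (Set.Ioi q)).toReal ≤ (Phat (Set.Ioi q)).toReal + τ := by
    intro q
    have h := (abs_le.1 (abs_le_TV P Phat (measurableSet_Ioi (a := q)))).2
    linarith [hTV]
  by_cases hcase : 1 ≤ α + ε
  · -- trivial case: the event is everything
    have hEuniv : E = Set.univ := by
      apply Set.eq_univ_of_forall
      intro s
      have h1 : (P (Set.Ioi (kthSmallest s k))).toReal ≤ 1 :=
        ENNReal.toReal_le_of_le_ofReal zero_le_one (by simpa using prob_le_one)
      simp only [hE, Set.mem_setOf_eq]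
      linarith
    rw [hEuniv, measure_univ]
    exact ENNReal.ofReal_le_one.2 (by nlinarith [Real.exp_pos (-2 * (m:ℝ) * ε ^ 2)])
  push_neg at hcase
  set c : ℝ := 1 - α - ε with hc
  have hc0 : 0 < c := by rw [hc]; linarith
  have hc1 : c < 1 := by rw [hc]; linarith
  obtain ⟨x₀, hx₀1, hx₀2⟩ := exists_quantile Phat c hc0 hc1
  set p : ℝ := (Phat (Set.Iio x₀)).toReal with hp
  have hp0 : 0 ≤ p := ENNReal.toReal_nonneg
  have hpc : p ≤ c := by
    rw [hp]
    exact ENNReal.toReal_le_of_le_ofReal (le_of_lt hc0) hx₀1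
  have hp1 : p ≤ 1 := le_trans hpc (le_of_lt hc1)
  -- the bad event
  set Bad : Set (Fin m → ℝ) :=
    {s : Fin m → ℝ | (k:ℝ) ≤ ∑ i : Fin m, (if s i < x₀ then (1:ℝ) else 0)} with hBad
  have hBadMeas : MeasurableSet Bad := by
    apply measurableSet_le measurable_const
    apply Finset.measurable_sum
    intro i _
    exact (Measurable.ite measurableSet_Iio measurable_const measurable_const).comp
      (measurable_pi_apply i)
  -- complement of Bad is inside E
  have hsub : Badᶜ ⊆ E := by
    intro s hs
    simp only [hBad, Set.mem_compl_iff, Set.mem_setOf_eq, not_le] at hs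
    simp only [hE, Set.mem_setOf_eq]
    have hPhattail : (Phat (Set.Ioi (kthSmallest s k))).toReal ≤ α + ε := by
      by_contra hcon
      push_neg at hcon
      set q := kthSmallest s k with hq
      have hIic : (Phat (Set.Iic q)).toReal < c := by
        have hcompl : Set.Ioi q = (Set.Iic q)ᶜ := by
          ext y; simp [not_le]
        have h2 : Phat (Set.Ioi q) = 1 - Phat (Set.Iic q) := by
          rw [hcompl, prob_compl_eq_one_sub measurableSet_Iic]
        have h3 : (Phat (Set.Ioi q)).toReal = 1 - (Phat (Set.Iic q)).toReal := by
          rw [h2, ENNReal.toReal_sub_of_le (by simpa using prob_le_one) ENNReal.one_ne_top]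
          simp
        have h4 : (Phat (Set.Iic q)).toReal = 1 - (Phat (Set.Ioi q)).toReal := by linarith
        rw [h4, hc]
        linarith
      have hqlt : q < x₀ := hx₀2 q hIic
      have := count_ge_of_kth_lt s k hk1 hkm x₀ hqlt
      linarith
    linarith [hPtail (kthSmallest s k)]
  -- Chernoff bound on Bad
  have hchern : μm Bad ≤ ENNReal.ofReal (Real.exp (-2 * m * ε ^ 2)) := by
    have h1 := chernoff_indicator Phat x₀ m (4 * ε) (k:ℝ) (by positivity)
    rw [← hp, ← hμm, ← hBad] at h1
    refine h1.trans (ENNReal.ofReal_le_ofReal ?_)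
    have hmgf : 1 - p + p * Real.exp (4 * ε) ≤ Real.exp (p * (4 * ε) + (4 * ε) ^ 2 / 8) :=
      bernoulli_mgf_bound p (4 * ε) hp0 hp1 (by positivity)
    have hpow : (1 - p + p * Real.exp (4 * ε)) ^ m ≤
        Real.exp (m * (p * (4 * ε) + (4 * ε) ^ 2 / 8)) := by
      have hexp : Real.exp ((m:ℝ) * (p * (4 * ε) + (4 * ε) ^ 2 / 8)) =
          (Real.exp (p * (4 * ε) + (4 * ε) ^ 2 / 8)) ^ m := Real.exp_nat_mul _ m
      rw [hexp]
      apply pow_le_pow_left₀ _ hmgf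
      nlinarith [Real.exp_pos (4 * ε)]
    calc Real.exp (-(4 * ε) * (k:ℝ)) * (1 - p + p * Real.exp (4 * ε)) ^ m
        ≤ Real.exp (-(4 * ε) * (k:ℝ)) * Real.exp (m * (p * (4 * ε) + (4 * ε) ^ 2 / 8)) := by
          apply mul_le_mul_of_nonneg_left hpow (Real.exp_nonneg _)
      _ = Real.exp (-(4 * ε) * (k:ℝ) + m * (p * (4 * ε) + (4 * ε) ^ 2 / 8)) := by
          rw [← Real.exp_add]
      _ ≤ Real.exp (-2 * m * ε ^ 2) := by
          apply Real.exp_le_exp.2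
          have h2 : 4 * ε * ((1 - α) * m) ≤ 4 * ε * (k:ℝ) :=
            mul_le_mul_of_nonneg_left hkge (by positivity)
          have h3 : (m:ℝ) * p ≤ (m:ℝ) * (1 - α - ε) :=
            mul_le_mul_of_nonneg_left (by rw [← hc]; exact hpc) (le_of_lt hm0)
          nlinarith [hm0, hε]
  -- conclude
  have hcompl : μm Badᶜ = 1 - μm Bad := by
    rw [measure_compl hBadMeas (measure_ne_top _ _), measure_univ]
  calc ENNReal.ofReal (1 - 2 * Real.exp (-2 * m * ε ^ 2))
      ≤ ENNReal.ofReal (1 - Real.exp (-2 * m * ε ^ 2)) := by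
        apply ENNReal.ofReal_le_ofReal
        linarith [Real.exp_pos (-2 * (m:ℝ) * ε ^ 2)]
    _ = 1 - ENNReal.ofReal (Real.exp (-2 * m * ε ^ 2)) := by
        rw [ENNReal.ofReal_sub _ (Real.exp_nonneg _), ENNReal.ofReal_one]
    _ ≤ 1 - μm Bad := tsub_le_tsub_left hchern 1
    _ = μm Badᶜ := hcompl.symm
    _ ≤ μm E := measure_mono hsub
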